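/- Let h be a hermitian form of rank n over (K, ‾) where K = F(√δ) is a quadratic field extension of F (char F ≠ 2), and let q_h be its trace form (a 2n-dimensional F-quadratic form). Then the Witt index of q_h equals twice the Witt index of h: i_w(q_h) = 2·i_w(h). -/

import Mathlib

/-!
A totally isotropic `K`-subspace of dimension `r` is an `F`-subspace of dimension `2r` on which
`q_h` vanishes. Conversely, let `q_h` vanish on an `F`-subspace `W`. Then `h` is skew on `W`, so
its values there are anti-fixed by `σ` and lie on the line `F s`, `s = √δ`. If `h` vanishes on
`W × W`, the `K`-span of `W` is totally isotropic. Otherwise pick `e, f ∈ W` with `h(e,f) ≠ 0`: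
`W ∩ e^⊥ ∩ f^⊥` has codimension at most `2` in `W` and its `K`-span misses `e`, so by induction it
yields a totally isotropic `K`-subspace to which `K e` can be added.
-/

open Module Submodule

theorem Nat.sSup_eq_mul_sSup {A B : Set ℕ} {c : ℕ} (hA : ∀ a ∈ A, ∃ b ∈ B, a ≤ c * b)
    (hB : ∀ b ∈ B, c * b ∈ A) (hne : B.Nonempty) (hbdd : BddAbove B) :
    sSup A = c * sSup B := by
  have hmem : sSup B ∈ B := Nat.sSup_mem hne hbdd
  have hle : ∀ a ∈ A, a ≤ c * sSup B := fun a ha => by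
    obtain ⟨b, hb, hab⟩ := hA a ha
    exact hab.trans (Nat.mul_le_mul_left c (le_csSup hbdd hb))
  exact le_antisymm (csSup_le ⟨_, hB _ hmem⟩ hle) (le_csSup ⟨_, hle⟩ (hB _ hmem))

theorem finrank_le_finrank_inf_ker_add_one {F V M : Type*} [Field F] [AddCommGroup V]
    [Module F V] [AddCommGroup M] [Module F M] {W : Submodule F V} [FiniteDimensional F W]
    (φ : V →ₗ[F] M) (m : M) (hφ : ∀ x ∈ W, φ x ∈ F ∙ m) :
    finrank F W ≤ finrank F ↥(W ⊓ LinearMap.ker φ) + 1 := by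
  have hrange : finrank F (LinearMap.range (φ.domRestrict W)) ≤ 1 := by
    refine (finrank_mono (t := F ∙ m) ?_).trans ?_
    · rintro _ ⟨x, rfl⟩
      exact hφ x x.2
    · simpa using finrank_span_le_card ({m} : Set M)
  have hker : finrank F (LinearMap.ker (φ.domRestrict W)) = finrank F ↥(W ⊓ LinearMap.ker φ) := by
    rw [LinearMap.ker_domRestrict, ← map_comap_subtype]
    exact (equivSubtypeMap W _).finrank_eq
  have := (φ.domRestrict W).finrank_range_add_finrank_ker
  omega

theorem finrank_le_finrank_mul_finrank_span {F K V : Type*} [Field F] [Field K] [Algebra F K]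
    [AddCommGroup V] [Module K V] [Module F V] [IsScalarTower F K V] [FiniteDimensional F V]
    (W : Submodule F V) : finrank F W ≤ finrank F K * finrank K (span K (W : Set V)) := by
  rw [finrank_mul_finrank]
  exact finrank_mono (t := (span K (W : Set V)).restrictScalars F) subset_span

theorem mem_span_singleton_of_apply_eq_neg {F K : Type*} [Field F] [Field K] [Algebra F K]
    (h2 : (2 : F) ≠ 0) (hrank : finrank F K = 2) {σ : K ≃ₐ[F] K} {s : K} (hs0 : s ≠ 0)
    (hσs : σ s = -s) {k : K} (hk : σ k = -k) : k ∈ F ∙ s := by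
  have : FiniteDimensional F K := Module.finite_of_finrank_eq_succ hrank
  -- the `(-1)`-eigenspace of `σ` misses `1`, so it is a proper subspace of the plane `K`
  set A := LinearMap.ker (σ.toLinearMap + LinearMap.id)
  have hmem : ∀ {x : K}, σ x = -x → x ∈ A := fun hx => by simp [A, hx]
  have hA : A ≠ ⊤ := by
    intro hA
    have h1 : (1 : K) ∈ A := hA ▸ mem_top
    have h2K : (2 : K) ≠ 0 := by
      rw [← map_ofNat (algebraMap F K) 2]; exact (map_ne_zero _).2 h2
    exact h2K (by simpa [A, one_add_one_eq_two] using h1)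
  have hsA : F ∙ s = A :=
    eq_of_le_of_finrank_le ((span_singleton_le_iff_mem _ _).2 (hmem hσs))
      (by have := finrank_lt hA; rw [finrank_span_singleton hs0]; omega)
  exact hsA ▸ hmem hk

structure IsHermitianForm {F K V : Type*} [CommRing F] [Field K] [Algebra F K] [AddCommGroup V]
    [Module K V] (σ : K ≃ₐ[F] K) (h : V → V → K) : Prop where
  add_left : ∀ x x' y, h (x + x') y = h x y + h x' y
  smul_left : ∀ (c : K) x y, h (c • x) y = σ c * h x y
  conj_symm : ∀ x y, h y x = σ (h x y)

def IsTotallyIsotropic {K V : Type*} [Zero K] (h : V → V → K) (S : Set V) : Prop :=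
  ∀ x ∈ S, ∀ y ∈ S, h x y = 0

namespace IsHermitianForm

variable {F K V : Type*} [Field F] [Field K] [Algebra F K] [AddCommGroup V] [Module K V]
  {σ : K ≃ₐ[F] K} {h : V → V → K}

theorem add_right (hh : IsHermitianForm σ h) (x y y' : V) :
    h x (y + y') = h x y + h x y' := by
  rw [hh.conj_symm (y + y') x, hh.add_left, map_add, ← hh.conj_symm, ← hh.conj_symm]

theorem zero_left (hh : IsHermitianForm σ h) (y : V) : h 0 y = 0 := by
  simpa using hh.smul_left 0 0 y

theorem eq_zero_comm (hh : IsHermitianForm σ h) {x y : V} : h x y = 0 ↔ h y x = 0 := by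
  rw [hh.conj_symm x y, map_eq_zero_iff σ σ.injective]

theorem eq_zero_of_mem_span_left (hh : IsHermitianForm σ h) {S : Set V} {x y : V}
    (hS : ∀ z ∈ S, h z y = 0) (hx : x ∈ span K S) : h x y = 0 := by
  induction hx using span_induction with
  | mem z hz => exact hS z hz
  | zero => exact hh.zero_left y
  | add a b _ _ ha hb => rw [hh.add_left, ha, hb, add_zero]
  | smul c a _ ha => rw [hh.smul_left, ha, mul_zero]

theorem isTotallyIsotropic_span (hh : IsHermitianForm σ h) {S : Set V}
    (hS : IsTotallyIsotropic h S) : IsTotallyIsotropic h (span K S) := fun _ hx _ hy =>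
  hh.eq_zero_of_mem_span_left (fun z hz => hh.eq_zero_comm.2 <|
    hh.eq_zero_of_mem_span_left (fun w hw => hh.eq_zero_comm.1 (hS z hz w hw)) hy) hx

theorem conj_eq_neg_of_isotropic (hh : IsHermitianForm σ h) {x y : V} (hx : h x x = 0)
    (hy : h y y = 0) (hxy : h (x + y) (x + y) = 0) : σ (h x y) = -h x y := by
  rw [hh.add_left, hh.add_right, hh.add_right, hx, hy] at hxy
  rw [← hh.conj_symm]
  linear_combination hxy

theorem isTotallyIsotropic_sup_span_singleton (hh : IsHermitianForm σ h) {U : Submodule K V}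
    {e : V} (hU : IsTotallyIsotropic h U) (he : h e e = 0) (hUe : ∀ u ∈ U, h u e = 0) :
    IsTotallyIsotropic h ↑(U ⊔ K ∙ e) := by
  rw [← span_eq U, ← span_union]
  refine hh.isTotallyIsotropic_span ?_
  rintro x (hx | rfl) y (hy | rfl)
  · exact hU x hx y hy
  · exact hUe x hx
  · exact hh.eq_zero_comm.1 (hUe y hy)
  · exact he

variable [Module F V] [IsScalarTower F K V]

theorem smul_left_of_tower (hh : IsHermitianForm σ h) (a : F) (x y : V) :
    h (a • x) y = a • h x y := by
  rw [← algebraMap_smul K a x, hh.smul_left, AlgEquiv.commutes, Algebra.smul_def]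

def toLinearMapLeft (hh : IsHermitianForm σ h) (y : V) : V →ₗ[F] K where
  toFun x := h x y
  map_add' x x' := hh.add_left x x' y
  map_smul' a x := hh.smul_left_of_tower a x y

variable [FiniteDimensional F V] {s : K}

theorem finrank_le_finrank_inf_ker_inf_ker_add_two (hh : IsHermitianForm σ h) (h2 : (2 : F) ≠ 0)
    (hrank : finrank F K = 2) (hs0 : s ≠ 0) (hσs : σ s = -s) {W : Submodule F V}
    (hW : ∀ x ∈ W, h x x = 0) {e f : V} (he : e ∈ W) (hf : f ∈ W) :
    finrank F W ≤ finrank F ↥(W ⊓ LinearMap.ker (hh.toLinearMapLeft e) ⊓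
      LinearMap.ker (hh.toLinearMapLeft f)) + 2 := by
  have hspan {x y : V} (hx : x ∈ W) (hy : y ∈ W) : h x y ∈ F ∙ s :=
    mem_span_singleton_of_apply_eq_neg h2 hrank hs0 hσs <|
      hh.conj_eq_neg_of_isotropic (hW x hx) (hW y hy) (hW _ (W.add_mem hx hy))
  have he' := finrank_le_finrank_inf_ker_add_one (hh.toLinearMapLeft e) s
    fun x hx => hspan hx he
  have hf' := finrank_le_finrank_inf_ker_add_one (W := W ⊓ LinearMap.ker (hh.toLinearMapLeft e))
    (hh.toLinearMapLeft f) s fun x hx => hspan hx.1 hf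
  omega

theorem exists_isTotallyIsotropic_le_span (hh : IsHermitianForm σ h) (h2 : (2 : F) ≠ 0)
    (hrank : finrank F K = 2) (hs0 : s ≠ 0) (hσs : σ s = -s) (W : Submodule F V)
    (hW : ∀ x ∈ W, h x x = 0) :
    ∃ U : Submodule K V, IsTotallyIsotropic h U ∧ U ≤ span K (W : Set V) ∧
      finrank F W ≤ 2 * finrank K U := by
  induction hN : finrank F W using Nat.strong_induction_on generalizing W with
  | _ N ih =>
  subst hN
  by_cases hiso : IsTotallyIsotropic h W
  · exact ⟨span K W, hh.isTotallyIsotropic_span hiso, le_rfl,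
      hrank ▸ finrank_le_finrank_mul_finrank_span W⟩
  obtain ⟨e, he, f, hf, hef⟩ : ∃ e ∈ W, ∃ f ∈ W, h e f ≠ 0 := by
    simpa [IsTotallyIsotropic] using hiso
  have hcodim := hh.finrank_le_finrank_inf_ker_inf_ker_add_two h2 hrank hs0 hσs hW he hf
  set W' := W ⊓ LinearMap.ker (hh.toLinearMapLeft e) ⊓ LinearMap.ker (hh.toLinearMapLeft f)
  have hW'W : W' ≤ W := inf_le_left.trans inf_le_left
  have heW' : e ∉ W' := fun he' => hef he'.2
  obtain ⟨U', hU', hU'W', hW'U'⟩ := ih _ (finrank_lt_finrank_of_lt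
    (lt_of_le_of_ne hW'W fun hEq => heW' (hEq ▸ he))) W' (fun x hx => hW x (hW'W hx)) rfl
  have hU'e : ∀ u ∈ U', h u e = 0 := fun u hu =>
    hh.eq_zero_of_mem_span_left (fun z hz => hz.1.2) (hU'W' hu)
  have heU' : e ∉ U' := fun he' =>
    hef (hh.eq_zero_of_mem_span_left (fun z hz => hz.2) (hU'W' he'))
  refine ⟨U' ⊔ K ∙ e, hh.isTotallyIsotropic_sup_span_singleton hU' (hW e he) hU'e,
    sup_le (hU'W'.trans (span_mono hW'W)) ((span_singleton_le_iff_mem _ _).2 (subset_span he)), ?_⟩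
  have : FiniteDimensional K V := .of_restrictScalars_finite F K V
  rw [finrank_sup_span_singleton heU']
  omega

end IsHermitianForm

theorem wittIndex_trace_form_unitary_general
    (F : Type) [Field F] (h2 : (2 : F) ≠ 0)
    (K : Type) [Field K] [Algebra F K] (hrank : Module.finrank F K = 2)
    (δ : F) (hδ : δ ≠ 0)
    (s : K) (hs : s * s = algebraMap F K δ)
    (σ : K ≃ₐ[F] K) (hσs : σ s = -s)
    (n : ℕ) (h : (Fin n → K) → (Fin n → K) → K)
    (hadd : ∀ x x' y, h (x + x') y = h x y + h x' y)
    (hsmul : ∀ (c : K) (x y), h (c • x) y = σ c * h x y)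
    (hherm : ∀ x y, h y x = σ (h x y)) :
    sSup {r | ∃ W : Submodule F (Fin n → K),
        (∀ x ∈ W, h x x = 0) ∧ Module.finrank F ↥W = r}
      = 2 * sSup {r | ∃ W : Submodule K (Fin n → K),
          (∀ x ∈ W, ∀ y ∈ W, h x y = 0) ∧ Module.finrank K ↥W = r} := by
  have : FiniteDimensional F K := Module.finite_of_finrank_eq_succ hrank
  have : FiniteDimensional F (Fin n → K) := Module.Finite.trans K _
  have hs0 : s ≠ 0 := by
    rintro rfl
    exact hδ (by simpa using hs.symm)
  have hh : IsHermitianForm σ h := ⟨hadd, hsmul, hherm⟩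
  apply Nat.sSup_eq_mul_sSup
  · rintro _ ⟨W, hW, rfl⟩
    obtain ⟨U, hU, -, hWU⟩ := hh.exists_isTotallyIsotropic_le_span h2 hrank hs0 hσs W hW
    exact ⟨_, ⟨U, hU, rfl⟩, hWU⟩
  · rintro _ ⟨U, hU, rfl⟩
    exact ⟨U.restrictScalars F, fun x hx => hU x hx x hx, hrank ▸ (finrank_mul_finrank F K U).symm⟩
  · exact ⟨0, ⊥, fun x hx _ _ => (mem_bot K).1 hx ▸ hh.zero_left _, finrank_bot K _⟩
  · exact ⟨finrank K (Fin n → K), by rintro _ ⟨U, -, rfl⟩; exact finrank_le U⟩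

/-- Let `K = F(√δ)` be a quadratic field extension of `F` (char `F ≠ 2`) with conjugation
`σ`, and let `h` be a nondegenerate hermitian form of rank `n` over `(K, σ)`.  The Witt
index of the trace form `q_h(x) = h(x,x)` (a `2n`-dimensional `F`-quadratic form on `Kⁿ`,
whose totally isotropic `F`-subspaces are those on which `h(x,x)` vanishes) equals twice
the Witt index of `h` (the maximal `K`-dimension of a totally isotropic `K`-subspace). -/
theorem wittIndex_trace_form_unitary
    (F : Type) [Field F] (h2 : (2 : F) ≠ 0)
    (K : Type) [Field K] [Algebra F K] (hrank : Module.finrank F K = 2)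
    (δ : F) (hδ : δ ≠ 0) (hns : ¬ IsSquare δ)
    (s : K) (hs : s * s = algebraMap F K δ)
    (σ : K ≃ₐ[F] K) (hσinv : ∀ x, σ (σ x) = x) (hσs : σ s = -s)
    (n : ℕ) (h : (Fin n → K) → (Fin n → K) → K)
    (hadd : ∀ x x' y, h (x + x') y = h x y + h x' y)
    (hsmul : ∀ (c : K) (x y), h (c • x) y = σ c * h x y)
    (hherm : ∀ x y, h y x = σ (h x y))
    (hnd : ∀ x, (∀ y, h x y = 0) → x = 0) :
    sSup {r | ∃ W : Submodule F (Fin n → K),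
        (∀ x ∈ W, h x x = 0) ∧ Module.finrank F ↥W = r}
      = 2 * sSup {r | ∃ W : Submodule K (Fin n → K),
          (∀ x ∈ W, ∀ y ∈ W, h x y = 0) ∧ Module.finrank K ↥W = r} :=
  wittIndex_trace_form_unitary_general F h2 K hrank δ hδ s hs σ hσs n h hadd hsmul hherm
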